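/- Let ω be a weight on ℤ with ρ₂(ω) < |z₀| < ρ₁(ω) for some z₀ ∈ ℂ with |z₀| > 1, and let f(z) = z₀ − z. Then f has ω-absolutely convergent Fourier series, f(z) ≠ 0 for all |z| = 1, but 1/f does not have ω-absolutely convergent Fourier series. Concretely, for ω(n) = e^{|n|} and 1 < |z₀| < e, the Fourier series of 1/f is ∑_{n≥0} z^n/z₀^{n+1} and ∑_{n≥0} e^n/|z₀|^{n+1} = ∞. -/

import Mathlib

open Real

/-- A weight on ℤ. -/
def IsWeight (w : ℤ → ℝ) : Prop :=
  (∀ n, 1 ≤ w n) ∧ ∀ m n, w (m + n) ≤ w m * w n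

/-- ρ₁(ω) = inf { ω(n)^(1/n) : n ≥ 1 }. -/
noncomputable def rho1 (w : ℤ → ℝ) : ℝ :=
  sInf {x : ℝ | ∃ n : ℤ, 1 ≤ n ∧ x = w n ^ ((n : ℝ)⁻¹)}

/-- ρ₂(ω) = sup { ω(n)^(1/n) : n ≤ -1 }. -/
noncomputable def rho2 (w : ℤ → ℝ) : ℝ :=
  sSup {x : ℝ | ∃ n : ℤ, n ≤ -1 ∧ x = w n ^ ((n : ℝ)⁻¹)}
/-- The n-th Fourier coefficient of a function on the unit circle. -/
noncomputable def fourierCoef (f : ℂ → ℂ) (n : ℤ) : ℂ :=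
  (1 / (2 * Real.pi) : ℝ) •
    ∫ t in (-Real.pi)..Real.pi,
      f (Complex.exp (Complex.I * t)) * Complex.exp (-Complex.I * n * t)

lemma orth (m : ℤ) : ∫ t : ℝ in (-Real.pi)..Real.pi, Complex.exp (Complex.I * m * t) =
    if m = 0 then (2 * Real.pi : ℂ) else 0 := by
  split_ifs with h
  · subst h
    simp only [Int.cast_zero, mul_zero, zero_mul, Complex.exp_zero]
    simp [two_mul]
  · have hm : (m : ℂ) ≠ 0 := Int.cast_ne_zero.mpr h
    have hc : (Complex.I * m) ≠ 0 := mul_ne_zero Complex.I_ne_zero hm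
    have := integral_exp_mul_complex (a := -Real.pi) (b := Real.pi) hc
    rw [this]
    have key : Complex.exp (Complex.I * m * Real.pi)
        = Complex.exp (Complex.I * m * (-Real.pi : ℝ)) := by
      rw [show (Complex.I * m * ((-Real.pi : ℝ) : ℂ))
          = Complex.I * m * Real.pi - m * (2 * Real.pi * Complex.I) by push_cast; ring]
      rw [Complex.exp_sub, Complex.exp_int_mul_two_pi_mul_I, div_one]
    rw [key, sub_self, zero_div]

lemma expI_ne (z₀ : ℂ) (h1 : 1 < ‖z₀‖) (t : ℝ) :
    z₀ - Complex.exp (Complex.I * t) ≠ 0 := by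
  intro h
  have : ‖Complex.exp (Complex.I * t)‖ = 1 := by
    rw [mul_comm]; exact Complex.norm_exp_ofReal_mul_I t
  rw [sub_eq_zero] at h
  rw [h, this] at h1; exact lt_irrefl _ h1

lemma contInv (z₀ : ℂ) (h1 : 1 < ‖z₀‖) :
    Continuous fun t : ℝ => (z₀ - Complex.exp (Complex.I * t))⁻¹ := by
  apply Continuous.inv₀
  · fun_prop
  · exact fun t => expI_ne z₀ h1 t

lemma integralInv (z₀ : ℂ) (h1 : 1 < ‖z₀‖) :
    ∫ t : ℝ in (-Real.pi)..Real.pi, (z₀ - Complex.exp (Complex.I * t))⁻¹ =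
      2 * Real.pi / z₀ := by
  have hz : z₀ ≠ 0 := by
    intro h; rw [h] at h1; simp at h1; linarith
  set F : ℝ → ℂ := fun t => t / z₀ +
    (Complex.I / z₀) * Complex.log (1 - Complex.exp (Complex.I * t) / z₀) with hF
  have hderiv : ∀ t ∈ Set.uIcc (-Real.pi) Real.pi,
      HasDerivAt F ((z₀ - Complex.exp (Complex.I * t))⁻¹) t := by
    intro t _
    have h1' : HasDerivAt (fun t : ℝ => ((t : ℂ) / z₀)) (1 / z₀) t := by
      simpa using (Complex.ofRealCLM.hasDerivAt (x := t)).div_const z₀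
    have hexp : HasDerivAt (fun t : ℝ => Complex.exp (Complex.I * t))
        (Complex.I * Complex.exp (Complex.I * t)) t := by
      have : HasDerivAt (fun t : ℝ => Complex.I * (t : ℂ)) Complex.I t := by
        simpa using (Complex.ofRealCLM.hasDerivAt (x := t)).const_mul Complex.I
      simpa [mul_comm] using this.cexp
    have hinner : HasDerivAt (fun t : ℝ => 1 - Complex.exp (Complex.I * t) / z₀)
        (-(Complex.I * Complex.exp (Complex.I * t) / z₀)) t := by
      simpa using ((hexp.div_const z₀).const_sub 1)
    have hslit : (1 - Complex.exp (Complex.I * t) / z₀) ∈ Complex.slitPlane := by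
      have hn : ‖-(Complex.exp (Complex.I * t) / z₀)‖ < 1 := by
        rw [norm_neg, norm_div, mul_comm,
          Complex.norm_exp_ofReal_mul_I]
        rw [div_lt_one (by linarith)]; linarith
      simpa [sub_eq_add_neg] using Complex.mem_slitPlane_of_norm_lt_one hn
    have hlog := hinner.clog_real hslit
    have := h1'.add ((hlog.const_mul (Complex.I / z₀)))
    convert this using 1
    · rfl
    · rfl
    have hne : (1 - Complex.exp (Complex.I * t) / z₀) ≠ 0 := Complex.slitPlane_ne_zero hslit
    have hne2 := expI_ne z₀ h1 t
    field_simp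
    ring_nf
    simp [Complex.I_sq]
  rw [intervalIntegral.integral_eq_sub_of_hasDerivAt hderiv
    ((contInv z₀ h1).intervalIntegrable _ _)]
  have e1 : Complex.exp (Complex.I * (Real.pi : ℝ)) = -1 := by
    rw [mul_comm]; exact_mod_cast Complex.exp_pi_mul_I
  have e2 : Complex.exp (Complex.I * ((-Real.pi : ℝ) : ℂ)) = -1 := by
    push_cast
    rw [show Complex.I * (-(Real.pi : ℂ)) = -(Real.pi * Complex.I) by ring, Complex.exp_neg,
      Complex.exp_pi_mul_I]
    norm_num
  simp only [hF]
  rw [e1]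
  push_cast
  rw [show Complex.I * -(Real.pi : ℂ) = Complex.I * ((-Real.pi : ℝ) : ℂ) by push_cast; ring, e2]
  ring

lemma fourierInvNat (z₀ : ℂ) (h1 : 1 < ‖z₀‖) (n : ℕ) :
    ∫ t : ℝ in (-Real.pi)..Real.pi,
      (z₀ - Complex.exp (Complex.I * t))⁻¹ * Complex.exp (-Complex.I * n * t)
      = 2 * Real.pi / z₀ ^ (n + 1) := by
  have hz : z₀ ≠ 0 := by
    intro h; rw [h] at h1; simp at h1; linarith
  induction n with
  | zero => simpa using integralInv z₀ h1
  | succ n ih =>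
    have key : ∀ t : ℝ, z₀ * ((z₀ - Complex.exp (Complex.I * t))⁻¹ *
          Complex.exp (-Complex.I * (n + 1 : ℕ) * t))
        = Complex.exp (Complex.I * ((-(n + 1) : ℤ) : ℂ) * t)
          + (z₀ - Complex.exp (Complex.I * t))⁻¹ * Complex.exp (-Complex.I * n * t) := by
      intro t
      have hne := expI_ne z₀ h1 t
      have hcast : Complex.exp (Complex.I * ((-(n + 1) : ℤ) : ℂ) * t)
          = Complex.exp (-Complex.I * (n + 1 : ℕ) * t) := by
        congr 1; push_cast; ring
      have hmul : Complex.exp (Complex.I * t) * Complex.exp (-Complex.I * (n + 1 : ℕ) * t)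
          = Complex.exp (-Complex.I * n * t) := by
        rw [← Complex.exp_add]; congr 1; push_cast; ring
      rw [hcast, ← hmul]
      field_simp
      ring
    have hI1 : IntervalIntegrable
        (fun t : ℝ => Complex.exp (Complex.I * ((-(n + 1) : ℤ) : ℂ) * t))
        MeasureTheory.volume (-Real.pi) Real.pi := by
      apply Continuous.intervalIntegrable; fun_prop
    have hI2 : IntervalIntegrable (fun t : ℝ => (z₀ - Complex.exp (Complex.I * t))⁻¹ *
        Complex.exp (-Complex.I * n * t)) MeasureTheory.volume (-Real.pi) Real.pi := by
      apply Continuous.intervalIntegrable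
      exact (contInv z₀ h1).mul (by fun_prop)
    have step : z₀ * ∫ t : ℝ in (-Real.pi)..Real.pi,
        (z₀ - Complex.exp (Complex.I * t))⁻¹ * Complex.exp (-Complex.I * (n + 1 : ℕ) * t)
        = 2 * Real.pi / z₀ ^ (n + 1) := by
      rw [← intervalIntegral.integral_const_mul]
      rw [intervalIntegral.integral_congr (g := fun t : ℝ =>
        Complex.exp (Complex.I * ((-(n + 1) : ℤ) : ℂ) * t)
          + (z₀ - Complex.exp (Complex.I * t))⁻¹ * Complex.exp (-Complex.I * n * t))
        (fun t _ => key t)]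
      rw [intervalIntegral.integral_add hI1 hI2, orth, ih]
      have : (-(n + 1) : ℤ) ≠ 0 := by omega
      rw [if_neg this, zero_add]
    have hz' : z₀ ^ (n + 1 + 1) = z₀ * z₀ ^ (n + 1) := by ring
    rw [hz', mul_comm z₀ (z₀ ^ (n + 1)), ← div_div, ← step]
    exact (mul_div_cancel_left₀ _ hz).symm

theorem wiener_fails_for_fixed_weight (w : ℤ → ℝ)
    (hdef : ∀ n : ℤ, w n = Real.exp |(n : ℝ)|)
    (z₀ : ℂ) (h1 : 1 < ‖z₀‖) (he : ‖z₀‖ < Real.exp 1)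
    (f : ℂ → ℂ) (hf : ∀ z, f z = z₀ - z) :
    (Summable fun n => ‖fourierCoef f n‖ * w n) ∧
      (∀ z : ℂ, ‖z‖ = 1 → f z ≠ 0) ∧
      (∀ n : ℤ, 0 ≤ n → fourierCoef (fun z => (f z)⁻¹) n = z₀ ^ (-(n + 1))) ∧
      ¬ (Summable fun n => ‖fourierCoef (fun z => (f z)⁻¹) n‖ * w n) ∧
      ¬ (Summable fun n : ℕ => Real.exp n / ‖z₀‖ ^ (n + 1)) := by
  have hz : z₀ ≠ 0 := by
    intro h; rw [h] at h1; simp at h1; linarith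
  have hpi : (Real.pi : ℂ) ≠ 0 := by
    exact_mod_cast Real.pi_ne_zero
  have hz0 : (0 : ℝ) < ‖z₀‖ := by linarith
  -- fourier coefficients of f
  have coefF : ∀ n : ℤ, fourierCoef f n = if n = 0 then z₀ else if n = 1 then -1 else 0 := by
    intro n
    unfold fourierCoef
    simp only [hf]
    have key : ∀ t : ℝ, (z₀ - Complex.exp (Complex.I * t)) * Complex.exp (-Complex.I * n * t)
        = z₀ * Complex.exp (Complex.I * ((-n : ℤ) : ℂ) * t)
          - Complex.exp (Complex.I * ((1 - n : ℤ) : ℂ) * t) := by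
      intro t
      rw [sub_mul, mul_assoc]
      congr 2
      · congr 1; push_cast; ring
      · rw [← Complex.exp_add]; congr 1; push_cast; ring
    rw [intervalIntegral.integral_congr (fun t _ => key t)]
    have hI1 : IntervalIntegrable
        (fun t : ℝ => z₀ * Complex.exp (Complex.I * ((-n : ℤ) : ℂ) * t))
        MeasureTheory.volume (-Real.pi) Real.pi := by
      apply Continuous.intervalIntegrable; fun_prop
    have hI2 : IntervalIntegrable (fun t : ℝ => Complex.exp (Complex.I * ((1 - n : ℤ) : ℂ) * t))
        MeasureTheory.volume (-Real.pi) Real.pi := by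
      apply Continuous.intervalIntegrable; fun_prop
    rw [intervalIntegral.integral_sub hI1 hI2, intervalIntegral.integral_const_mul, orth, orth]
    have hc1 : ((-n : ℤ) = 0) ↔ n = 0 := by omega
    have hc2 : ((1 - n : ℤ) = 0) ↔ n = 1 := by omega
    rcases eq_or_ne n 0 with rfl | hn0
    · simp only [if_pos rfl]
      norm_num
      field_simp
    · rcases eq_or_ne n 1 with rfl | hn1
      · norm_num
        field_simp
      · rw [if_neg (by omega : (-n : ℤ) ≠ 0), if_neg (by omega : (1 - n : ℤ) ≠ 0),
          if_neg hn0, if_neg hn1]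
        simp
  -- part 3
  have part3 : ∀ n : ℤ, 0 ≤ n → fourierCoef (fun z => (f z)⁻¹) n = z₀ ^ (-(n + 1)) := by
    intro n hn
    obtain ⟨m, rfl⟩ := Int.eq_ofNat_of_zero_le hn
    unfold fourierCoef
    simp only [hf]
    have hcast : ∀ t : ℝ, (z₀ - Complex.exp (Complex.I * t))⁻¹ *
          Complex.exp (-Complex.I * ((m : ℤ) : ℂ) * t)
        = (z₀ - Complex.exp (Complex.I * t))⁻¹ * Complex.exp (-Complex.I * (m : ℕ) * t) := by
      intro t
      have h : (((m : ℤ) : ℂ)) = ((m : ℕ) : ℂ) := by push_cast; ring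
      rw [h]
    rw [intervalIntegral.integral_congr (g := fun t : ℝ =>
      (z₀ - Complex.exp (Complex.I * t))⁻¹ * Complex.exp (-Complex.I * (m : ℕ) * t))
      (fun t _ => hcast t)]
    rw [fourierInvNat z₀ h1 m]
    rw [Complex.real_smul]
    rw [show (-(((m : ℤ) : ℤ) + 1)) = -((m + 1 : ℕ) : ℤ) by push_cast; ring]
    rw [zpow_neg, zpow_natCast]
    push_cast
    field_simp
  refine ⟨?_, ?_, part3, ?_, ?_⟩
  · apply summable_of_ne_finset_zero (s := ({0, 1} : Finset ℤ))
    intro n hn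
    simp only [Finset.mem_insert, Finset.mem_singleton] at hn
    push_neg at hn
    rw [coefF, if_neg hn.1, if_neg hn.2]
    simp
  · intro z hzabs
    rw [hf, sub_ne_zero]
    intro h
    rw [h, hzabs] at h1
    exact lt_irrefl _ h1
  · -- part 4: reduce to part 5
    intro hS
    have hinj : Function.Injective ((↑·) : ℕ → ℤ) := fun a b h => Int.natCast_inj.mp h
    have hS2 := hS.comp_injective hinj
    have heq : ∀ n : ℕ, (fun n : ℤ => ‖fourierCoef (fun z => (f z)⁻¹) n‖ * w n)
        ((↑·) n) = Real.exp n / ‖z₀‖ ^ (n + 1) := by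
      intro n
      simp only
      rw [part3 n (by positivity), hdef]
      rw [norm_zpow]
      rw [show (-((n : ℤ) + 1)) = -((n + 1 : ℕ) : ℤ) by push_cast; ring]
      rw [zpow_neg, zpow_natCast]
      rw [show |((n : ℤ) : ℝ)| = (n : ℝ) by simp]
      rw [div_eq_mul_inv, mul_comm]
    have := hS2.congr heq
    -- contradiction with part 5 proven below
    revert this
    intro hS3
    have hlb : ∀ n : ℕ, 1 / ‖z₀‖ ≤ Real.exp n / ‖z₀‖ ^ (n + 1) := by
      intro n
      rw [div_le_div_iff₀ hz0 (pow_pos hz0 _), pow_succ]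
      have hle : ‖z₀‖ ^ n ≤ Real.exp n := by
        calc ‖z₀‖ ^ n ≤ Real.exp 1 ^ n := pow_le_pow_left₀ hz0.le he.le n
          _ = Real.exp n := by rw [← Real.exp_nat_mul]; simp
      nlinarith
    have hle := ge_of_tendsto' hS3.tendsto_atTop_zero hlb
    have : (0 : ℝ) < 1 / ‖z₀‖ := by positivity
    linarith
  · intro hS3
    have hlb : ∀ n : ℕ, 1 / ‖z₀‖ ≤ Real.exp n / ‖z₀‖ ^ (n + 1) := by
      intro n
      rw [div_le_div_iff₀ hz0 (pow_pos hz0 _), pow_succ]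
      have hle : ‖z₀‖ ^ n ≤ Real.exp n := by
        calc ‖z₀‖ ^ n ≤ Real.exp 1 ^ n := pow_le_pow_left₀ hz0.le he.le n
          _ = Real.exp n := by rw [← Real.exp_nat_mul]; simp
      nlinarith
    have hle := ge_of_tendsto' hS3.tendsto_atTop_zero hlb
    have : (0 : ℝ) < 1 / ‖z₀‖ := by positivity
    linarith
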